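/- Fix N₂ ≥ 1, a bounded weight function w : ℝ^d → [0, B] with ||∇w||₂ ≤ β, and a function f : ℝ^d → ℝ with ||f||_∞ ≤ B and ||∇f||₂ ≤ β, both differentiable. Define F : (ℝ^d)^{N₂} → ℝ by F(x₁,…,x_{N₂}) = Σⱼ w(xⱼ) f(xⱼ) / Σⱼ w(xⱼ). Then at any point X = (x₁,…,x_{N₂}) where Σⱼ w(xⱼ) > 0, the Euclidean norm of the gradient of F satisfies ||∇F(X)||₂² ≤ 10 B² β² N₂ / (Σⱼ w(xⱼ))². In particular, on the set where |(1/N₂)Σⱼ w(xⱼ) − μ| ≤ μ/2 for some μ > 0, F is √(40/N₂)·(Bβ/μ)-Lipschitz. -/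

import Mathlib

/-!
With `S_X = ∑ⱼ w(xⱼ)`, any two configurations satisfy
`(F X - F Y) S_X = ∑ⱼ w(xⱼ)(f(xⱼ) - f(yⱼ)) + ∑ⱼ (w(xⱼ) - w(yⱼ))(f(yⱼ) - F Y)`,
also when `S_Y = 0` (then all weights at `Y` vanish and `F Y` is the junk value `0`).
Since `|F Y| ≤ B`, each summand is at most `3Bβ‖xⱼ - yⱼ‖`, and Cauchy–Schwarz gives
`∑ⱼ ‖xⱼ - yⱼ‖ ≤ √N₂ ‖X - Y‖`; hence `|F X - F Y| ≤ 3Bβ√N₂ ‖X - Y‖ / S_X` for every `Y`.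
This one-sided Lipschitz bound at `X` bounds the gradient there by `3Bβ√N₂ / S_X`, and
where the mean weight is within `μ/2` of `μ` we have `S_X ≥ N₂μ/2`.
-/

section WeightedAverage

variable {ι : Type*} [Fintype ι]

noncomputable def weightedAvg (a b : ι → ℝ) : ℝ :=
  (∑ i, a i * b i) / ∑ i, a i

lemma weightedAvg_mul_sum {a : ι → ℝ} (ha : ∀ i, 0 ≤ a i) (b : ι → ℝ) :
    weightedAvg a b * ∑ i, a i = ∑ i, a i * b i := by
  by_cases hS : ∑ i, a i = 0
  · have hzero := (Finset.sum_eq_zero_iff_of_nonneg fun i _ => ha i).1 hS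
    rw [hS, mul_zero, Finset.sum_eq_zero fun i hi => by rw [hzero i hi, zero_mul]]
  · exact div_mul_cancel₀ _ hS

lemma abs_weightedAvg_le {a b : ι → ℝ} {B : ℝ} (hB : 0 ≤ B) (ha : ∀ i, 0 ≤ a i)
    (hb : ∀ i, |b i| ≤ B) : |weightedAvg a b| ≤ B := by
  have hnum : |∑ i, a i * b i| ≤ B * ∑ i, a i := by
    rw [Finset.mul_sum]
    refine (Finset.abs_sum_le_sum_abs _ _).trans (Finset.sum_le_sum fun i _ => ?_)
    rw [abs_mul, abs_of_nonneg (ha i), mul_comm]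
    exact mul_le_mul_of_nonneg_right (hb i) (ha i)
  rcases (Finset.sum_nonneg (s := Finset.univ) fun i _ => ha i).eq_or_lt with hS | hS
  · simp [weightedAvg, ← hS, hB]
  · rw [weightedAvg, abs_div, abs_of_pos hS, div_le_iff₀ hS]
    exact hnum

lemma weightedAvg_sub_mul_sum (a b : ι → ℝ) {a' : ι → ℝ} (ha' : ∀ i, 0 ≤ a' i) (b' : ι → ℝ)
    (hS : ∑ i, a i ≠ 0) :
    (weightedAvg a b - weightedAvg a' b') * ∑ i, a i =
      ∑ i, (a i * (b i - b' i) + (a i - a' i) * (b' i - weightedAvg a' b')) := by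
  have hb' := weightedAvg_mul_sum ha' b'
  have hrhs : ∀ i, a i * (b i - b' i) + (a i - a' i) * (b' i - weightedAvg a' b') =
      a i * b i - a' i * b' i - (a i - a' i) * weightedAvg a' b' := fun i => by ring
  simp only [hrhs, Finset.sum_sub_distrib, ← Finset.sum_mul]
  rw [← hb', sub_mul, weightedAvg, div_mul_cancel₀ _ hS]
  ring

lemma abs_weightedAvg_sub_le {a b a' b' : ι → ℝ} {B : ℝ} (ha : ∀ i, |a i| ≤ B)
    (ha' : ∀ i, 0 ≤ a' i) (hb' : ∀ i, |b' i| ≤ B) (hS : 0 < ∑ i, a i) :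
    |weightedAvg a b - weightedAvg a' b'| ≤
      B * (∑ i, (|b i - b' i| + 2 * |a i - a' i|)) / ∑ i, a i := by
  obtain ⟨i₀, -, -⟩ := Finset.exists_ne_zero_of_sum_ne_zero hS.ne'
  have hB : 0 ≤ B := (abs_nonneg _).trans (ha i₀)
  have havg := abs_weightedAvg_le hB ha' hb'
  rw [le_div_iff₀ hS, ← abs_of_pos hS, ← abs_mul, weightedAvg_sub_mul_sum a b ha' b' hS.ne',
    Finset.mul_sum]
  refine (Finset.abs_sum_le_sum_abs _ _).trans (Finset.sum_le_sum fun i _ => ?_)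
  have hdev : |b' i - weightedAvg a' b'| ≤ 2 * B := by
    linarith [abs_sub (b' i) (weightedAvg a' b'), hb' i]
  calc |a i * (b i - b' i) + (a i - a' i) * (b' i - weightedAvg a' b')|
      ≤ |a i| * |b i - b' i| + |a i - a' i| * |b' i - weightedAvg a' b'| := by
        rw [← abs_mul, ← abs_mul]; exact abs_add_le _ _
    _ ≤ B * |b i - b' i| + |a i - a' i| * (2 * B) := by gcongr; exact ha i
    _ = B * (|b i - b' i| + 2 * |a i - a' i|) := by ring

end WeightedAverage

lemma abs_sub_le_of_norm_gradient_le {E : Type*} [NormedAddCommGroup E]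
    [InnerProductSpace ℝ E] [CompleteSpace E] {u : E → ℝ} (hu : Differentiable ℝ u) {β : ℝ}
    (hβ : ∀ x, ‖gradient u x‖ ≤ β) (x y : E) : |u x - u y| ≤ β * ‖x - y‖ := by
  have hfderiv : ∀ z, ‖fderiv ℝ u z‖ ≤ β := fun z => by
    simpa [gradient] using hβ z
  simpa [Real.norm_eq_abs] using convex_univ.norm_image_sub_le_of_norm_fderiv_le
    (fun z _ => hu z) (fun z _ => hfderiv z) (Set.mem_univ y) (Set.mem_univ x)

lemma norm_gradient_le_of_abs_sub_le {E : Type*} [NormedAddCommGroup E]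
    [InnerProductSpace ℝ E] [CompleteSpace E] {u : E → ℝ} {x : E} {C : ℝ} (hC : 0 ≤ C)
    (h : ∀ y, |u x - u y| ≤ C * ‖x - y‖) : ‖gradient u x‖ ≤ C := by
  rw [gradient, LinearIsometryEquiv.norm_map]
  refine norm_fderiv_le_of_lip' ℝ hC (Filter.Eventually.of_forall fun y => ?_)
  rw [Real.norm_eq_abs, abs_sub_comm, norm_sub_rev]
  exact h y

lemma abs_weightedAvg_comp_sub_le {ι E : Type*} [Fintype ι] [SeminormedAddCommGroup E]
    {w f : E → ℝ} {B β : ℝ} (hwB : ∀ x, w x ∈ Set.Icc 0 B) (hfB : ∀ x, |f x| ≤ B)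
    (hwL : ∀ x y, |w x - w y| ≤ β * ‖x - y‖) (hfL : ∀ x y, |f x - f y| ≤ β * ‖x - y‖)
    (x y : ι → E) (hS : 0 < ∑ i, w (x i)) :
    |weightedAvg (w ∘ x) (f ∘ x) - weightedAvg (w ∘ y) (f ∘ y)| ≤
      3 * B * β * (∑ i, ‖x i - y i‖) / ∑ i, w (x i) := by
  have hw_abs : ∀ z, |w z| ≤ B := fun z => by rw [abs_of_nonneg (hwB z).1]; exact (hwB z).2
  refine (abs_weightedAvg_sub_le (fun i => hw_abs (x i)) (fun i => (hwB (y i)).1)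
    (fun i => hfB (y i)) hS).trans ?_
  have hB : 0 ≤ B := (hwB 0).1.trans (hwB 0).2
  have hterm : ∀ i, |f (x i) - f (y i)| + 2 * |w (x i) - w (y i)| ≤ 3 * β * ‖x i - y i‖ :=
    fun i => by linarith [hfL (x i) (y i), hwL (x i) (y i)]
  calc B * (∑ i, (|f (x i) - f (y i)| + 2 * |w (x i) - w (y i)|)) / ∑ i, w (x i)
      ≤ B * (∑ i, 3 * β * ‖x i - y i‖) / ∑ i, w (x i) := by
        gcongr with i; exact hterm i
    _ = 3 * B * β * (∑ i, ‖x i - y i‖) / ∑ i, w (x i) := by rw [← Finset.mul_sum]; ring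

section EuclideanRow

variable {ι κ : Type*}

def euclideanRow (X : EuclideanSpace ℝ (ι × κ)) (j : ι) : EuclideanSpace ℝ κ :=
  WithLp.toLp 2 fun k => X (j, k)

lemma euclideanRow_sub (X Y : EuclideanSpace ℝ (ι × κ)) (j : ι) :
    euclideanRow (X - Y) j = euclideanRow X j - euclideanRow Y j :=
  rfl

lemma sum_norm_sq_euclideanRow [Fintype ι] [Fintype κ] (X : EuclideanSpace ℝ (ι × κ)) :
    ∑ j, ‖euclideanRow X j‖ ^ 2 = ‖X‖ ^ 2 := by
  simp only [EuclideanSpace.norm_sq_eq, Fintype.sum_prod_type]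
  rfl

lemma sum_norm_euclideanRow_le [Fintype ι] [Fintype κ] (X : EuclideanSpace ℝ (ι × κ)) :
    ∑ j, ‖euclideanRow X j‖ ≤ √(Fintype.card ι) * ‖X‖ := by
  have hCS := sq_sum_le_card_mul_sum_sq (s := Finset.univ) (f := fun j => ‖euclideanRow X j‖)
  rw [sum_norm_sq_euclideanRow, Finset.card_univ] at hCS
  calc ∑ j, ‖euclideanRow X j‖ ≤ √(Fintype.card ι * ‖X‖ ^ 2) :=
        (le_abs_self _).trans (Real.abs_le_sqrt hCS)
    _ = √(Fintype.card ι) * ‖X‖ := by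
        rw [Real.sqrt_mul (Nat.cast_nonneg _), Real.sqrt_sq (norm_nonneg _)]

end EuclideanRow

lemma pos_and_le_sum_of_abs_mean_sub_le {N : ℕ} {S μ : ℝ} (hμ : 0 < μ)
    (h : |1 / (N : ℝ) * S - μ| ≤ μ / 2) : 0 < N ∧ N * μ / 2 ≤ S := by
  have hN : 0 < N := Nat.pos_of_ne_zero fun hN => by
    subst hN; simp [abs_of_pos hμ] at h; linarith
  refine ⟨hN, ?_⟩
  have hlow := (abs_le.1 h).1
  field_simp at hlow
  linarith

theorem stmt_4_general {d N₂ : ℕ} (B β : ℝ)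
    (w f : EuclideanSpace ℝ (Fin d) → ℝ)
    (hw : Differentiable ℝ w) (hf : Differentiable ℝ f)
    (hwB : ∀ x, w x ∈ Set.Icc 0 B) (hfB : ∀ x, |f x| ≤ B)
    (hwL : ∀ x, ‖gradient w x‖ ≤ β) (hfL : ∀ x, ‖gradient f x‖ ≤ β)
    (F : EuclideanSpace ℝ (Fin N₂ × Fin d) → ℝ)
    (hF : ∀ X : EuclideanSpace ℝ (Fin N₂ × Fin d),
      F X = (∑ j, w (WithLp.toLp 2 (fun k => X (j, k))) * f (WithLp.toLp 2 (fun k => X (j, k))))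
            / (∑ j, w (WithLp.toLp 2 (fun k => X (j, k))))) :
    (∀ X : EuclideanSpace ℝ (Fin N₂ × Fin d),
      0 < ∑ j, w (WithLp.toLp 2 (fun k => X (j, k))) →
      ‖gradient F X‖ ^ 2 ≤ 10 * B ^ 2 * β ^ 2 * N₂ / (∑ j, w (WithLp.toLp 2 (fun k => X (j, k)))) ^ 2)
    ∧ (∀ μ : ℝ, 0 < μ →
        ∀ X Y : EuclideanSpace ℝ (Fin N₂ × Fin d),
        |(1 / (N₂ : ℝ)) * ∑ j, w (WithLp.toLp 2 (fun k => X (j, k))) - μ| ≤ μ / 2 →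
        |(1 / (N₂ : ℝ)) * ∑ j, w (WithLp.toLp 2 (fun k => Y (j, k))) - μ| ≤ μ / 2 →
        |F X - F Y| ≤ Real.sqrt (40 / (N₂ : ℝ)) * (B * β / μ) * ‖X - Y‖) := by
  have hB : 0 ≤ B := (hwB 0).1.trans (hwB 0).2
  have hβ : 0 ≤ β := (norm_nonneg _).trans (hwL 0)
  have hlip : ∀ X Y, 0 < ∑ j, w (euclideanRow X j) →
      |F X - F Y| ≤ 3 * B * β * √N₂ / (∑ j, w (euclideanRow X j)) * ‖X - Y‖ := by
    intro X Y hS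
    rw [hF X, hF Y, div_mul_eq_mul_div, mul_assoc _ (√_)]
    refine (abs_weightedAvg_comp_sub_le hwB hfB (abs_sub_le_of_norm_gradient_le hw hwL)
      (abs_sub_le_of_norm_gradient_le hf hfL) (euclideanRow X) (euclideanRow Y) hS).trans ?_
    gcongr
    simpa only [Fintype.card_fin, euclideanRow_sub] using sum_norm_euclideanRow_le (X - Y)
  refine ⟨fun X hS => ?_, fun μ hμ X Y hX _ => ?_⟩
  · set S := ∑ j, w (WithLp.toLp 2 fun k => X (j, k))
    calc ‖gradient F X‖ ^ 2 ≤ (3 * B * β * √N₂ / S) ^ 2 := by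
          gcongr
          exact norm_gradient_le_of_abs_sub_le (by positivity) (hlip X · hS)
      _ = 9 * B ^ 2 * β ^ 2 * N₂ / S ^ 2 := by
        rw [div_pow, mul_pow, Real.sq_sqrt (Nat.cast_nonneg _)]; ring
      _ ≤ 10 * B ^ 2 * β ^ 2 * N₂ / S ^ 2 := by gcongr; norm_num
  · set S := ∑ j, w (WithLp.toLp 2 fun k => X (j, k))
    obtain ⟨hN, hNμ⟩ := pos_and_le_sum_of_abs_mean_sub_le hμ hX
    have hN' : (0 : ℝ) < N₂ := Nat.cast_pos.2 hN
    have hS : 0 < S := lt_of_lt_of_le (by positivity) hNμ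
    calc |F X - F Y| ≤ 3 * B * β * √N₂ / S * ‖X - Y‖ := hlip X Y hS
      _ ≤ 3 * B * β * √N₂ / (N₂ * μ / 2) * ‖X - Y‖ := by gcongr
      _ = 6 / √N₂ * (B * β / μ) * ‖X - Y‖ := by
        field_simp
        rw [Real.sq_sqrt hN'.le]
        ring
      _ ≤ √(40 / N₂) * (B * β / μ) * ‖X - Y‖ := by
        gcongr
        rw [Real.sqrt_div (by norm_num)]
        gcongr
        rw [Real.le_sqrt (by norm_num) (by norm_num)]
        norm_num

theorem stmt_4 {d N₂ : ℕ} (B β : ℝ) (hB : 0 ≤ B) (hβ : 0 ≤ β)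
    (w f : EuclideanSpace ℝ (Fin d) → ℝ)
    (hw : Differentiable ℝ w) (hf : Differentiable ℝ f)
    (hwB : ∀ x, w x ∈ Set.Icc 0 B) (hfB : ∀ x, |f x| ≤ B)
    (hwL : ∀ x, ‖gradient w x‖ ≤ β) (hfL : ∀ x, ‖gradient f x‖ ≤ β)
    (F : EuclideanSpace ℝ (Fin N₂ × Fin d) → ℝ)
    (hF : ∀ X : EuclideanSpace ℝ (Fin N₂ × Fin d),
      F X = (∑ j, w (WithLp.toLp 2 (fun k => X (j, k))) * f (WithLp.toLp 2 (fun k => X (j, k))))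
            / (∑ j, w (WithLp.toLp 2 (fun k => X (j, k))))) :
    (∀ X : EuclideanSpace ℝ (Fin N₂ × Fin d),
      0 < ∑ j, w (WithLp.toLp 2 (fun k => X (j, k))) →
      ‖gradient F X‖ ^ 2 ≤ 10 * B ^ 2 * β ^ 2 * N₂ / (∑ j, w (WithLp.toLp 2 (fun k => X (j, k)))) ^ 2)
    ∧ (∀ μ : ℝ, 0 < μ →
        ∀ X Y : EuclideanSpace ℝ (Fin N₂ × Fin d),
        |(1 / (N₂ : ℝ)) * ∑ j, w (WithLp.toLp 2 (fun k => X (j, k))) - μ| ≤ μ / 2 →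
        |(1 / (N₂ : ℝ)) * ∑ j, w (WithLp.toLp 2 (fun k => Y (j, k))) - μ| ≤ μ / 2 →
        |F X - F Y| ≤ Real.sqrt (40 / (N₂ : ℝ)) * (B * β / μ) * ‖X - Y‖) :=
  stmt_4_general B β w f hw hf hwB hfB hwL hfL F hF
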